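/- arXiv:1109.4924 — 2 statements merged into one kernel-verified Lean document; each statement's English description precedes it below -/
import Mathlib

section
/- Let p > 1 and let g : (1,∞) → ℝ be any function such that for every t > 1, g(t) ∈ [1, p/(p-1)] and -(p-1)·g(t)^p + p·g(t)^{p-1} = 1/t. Then the function G : (1,∞) → ℝ defined by G(t) = t · g(t)^p is strictly concave on (1,∞). -/
/-!
Write `H(z) = -(p-1) z^p + p z^(p-1)`, so that `t H(g t) = 1`. For `z > 1` the affine function
`ℓ_z(t) = (t z^p - z) / ((p-1)(z-1))` satisfies `ℓ_z(t) = t z^p` when `t H(z) = 1`, while for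
`z ≠ g t` the inequality `t g(t)^p < ℓ_z(t)` is, after clearing denominators, the strict
tangent-line inequality for the strictly convex `z ↦ z^p` at `g t`. Thus `G = inf_z ℓ_z`, and each
`ℓ_z` touches `G` at one point only because `g` is injective; a lower envelope of affine functions
with this property is strictly concave.
-/

open Set

theorem StrictConcaveOn.of_affine_majorants {𝕜 E : Type*} [Field 𝕜] [LinearOrder 𝕜]
    [IsStrictOrderedRing 𝕜] [AddCommGroup E] [Module 𝕜 E] {s : Set E} {f : E → 𝕜}
    (hs : Convex 𝕜 s) (ℓ : E → E →ᵃ[𝕜] 𝕜) (h_eq : ∀ t ∈ s, f t = ℓ t t)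
    (h_lt : ∀ t ∈ s, ∀ u ∈ s, u ≠ t → f u < ℓ t u) : StrictConcaveOn 𝕜 s f := by
  refine ⟨hs, fun x hx y hy hxy a b ha hb hab => ?_⟩
  set m := a • x + b • y
  have hm : m ∈ s := hs hx hy ha.le hb.le hab
  have h_le : ∀ u ∈ s, f u ≤ ℓ m u := fun u hu => by
    rcases eq_or_ne u m with rfl | h
    exacts [(h_eq _ hm).le, (h_lt m hm u hu h).le]
  have h_ne : x ≠ m ∨ y ≠ m := by
    by_contra! h
    exact hxy (h.1.trans h.2.symm)
  calc a • f x + b • f y < a • ℓ m x + b • ℓ m y := by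
        rcases h_ne with h | h
        · exact add_lt_add_of_lt_of_le (smul_lt_smul_of_pos_left (h_lt m hm x hx h) ha)
            (smul_le_smul_of_nonneg_left (h_le y hy) hb.le)
        · exact add_lt_add_of_le_of_lt (smul_le_smul_of_nonneg_left (h_le x hx) ha.le)
            (smul_lt_smul_of_pos_left (h_lt m hm y hy h) hb)
    _ = f m := by rw [← Convex.combo_affine_apply hab, h_eq m hm]

theorem Real.rpow_tangent_lt {p z w : ℝ} (hp : 1 < p) (hz : 0 ≤ z) (hw : 0 < w) (hzw : z ≠ w) :
    w ^ p + p * w ^ (p - 1) * (z - w) < z ^ p := by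
  have hb := one_add_mul_self_lt_rpow_one_add (s := z / w - 1)
    (by linarith [div_nonneg hz hw.le]) (sub_ne_zero.2 ((div_eq_one_iff_eq hw.ne').not.2 hzw)) hp
  rw [add_sub_cancel, Real.div_rpow hz hw.le, lt_div_iff₀ (by positivity)] at hb
  calc w ^ p + p * w ^ (p - 1) * (z - w) = (1 + p * (z / w - 1)) * w ^ p := by
        rw [Real.rpow_sub_one hw.ne']; field_simp
    _ < z ^ p := hb

namespace Bellman

noncomputable def H (p z : ℝ) : ℝ := -(p - 1) * z ^ p + p * z ^ (p - 1)

theorem H_one (p : ℝ) : H p 1 = 1 := by simp [H]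

noncomputable def supportLine (p z : ℝ) : ℝ →ᵃ[ℝ] ℝ where
  toFun t := (t * z ^ p - z) / ((p - 1) * (z - 1))
  linear := (z ^ p / ((p - 1) * (z - 1))) • LinearMap.id
  map_vadd' t v := by
    simp only [vadd_eq_add, LinearMap.smul_apply, LinearMap.id_apply, smul_eq_mul]
    ring

theorem supportLine_apply (p z t : ℝ) :
    supportLine p z t = (t * z ^ p - z) / ((p - 1) * (z - 1)) := rfl

variable {p t w : ℝ}

theorem supportLine_self (hp : 1 < p) (hw : 1 < w) (h : t * H p w = 1) :
    supportLine p w t = t * w ^ p := by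
  have hw_pow : w ^ (p - 1) * w = w ^ p := by
    rw [Real.rpow_sub_one (by positivity)]; field_simp
  rw [supportLine_apply, div_eq_iff (by nlinarith)]
  unfold H at h
  linear_combination w * h - p * t * hw_pow

theorem mul_rpow_lt_supportLine {z : ℝ} (hp : 1 < p) (ht : 0 < t) (hz : 1 < z) (hw : 0 < w)
    (h : t * H p w = 1) (hzw : z ≠ w) : t * w ^ p < supportLine p z t := by
  have hw_pow : w ^ (p - 1) * w = w ^ p := by
    rw [Real.rpow_sub_one hw.ne']; field_simp
  have h_tangent := mul_lt_mul_of_pos_left (Real.rpow_tangent_lt hp (by positivity) hw hzw) ht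
  rw [supportLine_apply, lt_div_iff₀ (by nlinarith)]
  unfold H at h
  linear_combination h_tangent - z * h + p * t * hw_pow

end Bellman

/-- The function `G(t) = t ω_p(1/t)^p` is strictly concave on `(1, ∞)`. -/
theorem bellman_strictConcaveOn (p : ℝ) (hp : 1 < p) (g : ℝ → ℝ)
    (hg : ∀ t : ℝ, 1 < t → g t ∈ Set.Icc 1 (p / (p - 1)) ∧
      -(p - 1) * g t ^ p + p * g t ^ (p - 1) = 1 / t) :
    StrictConcaveOn ℝ (Set.Ioi (1 : ℝ)) (fun t => t * g t ^ p) := by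
  have hg' : ∀ t ∈ Ioi (1 : ℝ), 1 < g t ∧ t * Bellman.H p (g t) = 1 := by
    intro t (ht : 1 < t)
    obtain ⟨⟨hg_one, -⟩, h_eq⟩ := hg t ht
    have hH : t * Bellman.H p (g t) = 1 := by
      rw [Bellman.H, h_eq, mul_one_div_cancel (by positivity)]
    refine ⟨hg_one.lt_of_ne fun h => ?_, hH⟩
    rw [← h, Bellman.H_one, mul_one] at hH
    exact ht.ne' hH
  refine .of_affine_majorants (convex_Ioi 1) (fun t => Bellman.supportLine p (g t))
    (fun t ht => (Bellman.supportLine_self hp (hg' t ht).1 (hg' t ht).2).symm)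
    (fun t ht u hu hut => ?_)
  obtain ⟨hgu, hHu⟩ := hg' u hu
  refine Bellman.mul_rpow_lt_supportLine hp (one_pos.trans hu) (hg' t ht).1 (one_pos.trans hgu)
    hHu fun h => hut ?_
  have hHt := (hg' t ht).2
  rw [h] at hHt
  exact mul_right_cancel₀ (right_ne_zero_of_mul_eq_one hHu) (hHu.trans hHt.symm)
end

section
/- Let n ≥ 1, let Q = [0,1)^n with Lebesgue measure, let p > 1, let f, F be reals with 0 < f^p < F, and let z ∈ [1, p/(p-1)] satisfy -(p-1)z^p + p z^{p-1} = f^p/F. Then there is no nonnegative measurable function φ on Q with ∫_Q φ = f, ∫_Q φ^p = F, and ∫_Q (Mφ)^p = F·z^p. -/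
/-!
Write `f = ∫_Q φ`, `E_t = {Mφ > t}` and `q = p/(p-1)`. Up to a null set, `E_t` is the union of
the dyadic cubes on which `φ` has average `> t`, hence the disjoint union of the maximal ones, so
`t |E_t| ≤ ∫_{E_t} φ`, strictly as soon as `E_t ≠ ∅`. Since `Mφ ≥ f` on `Q`, the layer-cake
formula gives
  `∫ (Mφ)^p = f^p + p ∫_f^∞ t^(p-1) |E_t| dt`,
  `∫ φ (Mφ)^(p-1) = f^p + (p-1) ∫_f^∞ t^(p-2) ∫_{E_t} φ dt`,
and Hölder bounds the second left-hand side by `F^(1/p) (F z^p)^(1/q) = F z^(p-1)`. When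
`-(p-1) z^p + p z^(p-1) = f^p/F`, these force `∫_f^∞ t^(p-2) ∫_{E_t} φ ≤ ∫_f^∞ t^(p-1) |E_t|`,
contradicting the strict weak-type inequality on the levels `t > f` where `|E_t| > 0`; such levels
exist because otherwise `∫ (Mφ)^p = f^p < F ≤ F z^p`.
-/

open MeasureTheory Set Filter

noncomputable section

/-- The unit cube `[0,1)^n` in `ℝ^n`. -/
def unitCube (n : ℕ) : Set (Fin n → ℝ) := Set.univ.pi fun _ => Set.Ico (0:ℝ) 1

/-- A dyadic subcube of the unit cube: a product of intervals
`[k_i 2^{-N}, (k_i+1) 2^{-N})` with `0 ≤ k_i < 2^N`. -/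
def IsDyadicCube (n : ℕ) (R : Set (Fin n → ℝ)) : Prop :=
  ∃ (N : ℕ) (k : Fin n → ℕ), (∀ i, k i < 2 ^ N) ∧
    R = Set.univ.pi fun i => Set.Ico ((k i : ℝ) / 2 ^ N) (((k i : ℝ) + 1) / 2 ^ N)

/-- The (localized) dyadic maximal operator on the unit cube:
`Mφ(x) = sup { (1/|R|) ∫_R φ : x ∈ R, R a dyadic subcube of Q }`. -/
def dyadicMax (n : ℕ) (φ : (Fin n → ℝ) → ℝ) (x : Fin n → ℝ) : ℝ :=
  sSup { a : ℝ | ∃ R : Set (Fin n → ℝ), IsDyadicCube n R ∧ x ∈ R ∧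
    a = ((volume R).toReal)⁻¹ * ∫ y in R, φ y }

/-- The dyadic maximal operator localized to a dyadic subcube `J`:
the supremum is taken only over dyadic subcubes contained in `J`. -/
def dyadicMaxIn (n : ℕ) (J : Set (Fin n → ℝ)) (φ : (Fin n → ℝ) → ℝ)
    (x : Fin n → ℝ) : ℝ :=
  sSup { a : ℝ | ∃ R : Set (Fin n → ℝ), IsDyadicCube n R ∧ R ⊆ J ∧ x ∈ R ∧
    a = ((volume R).toReal)⁻¹ * ∫ y in R, φ y }

open scoped ENNReal

theorem lintegral_Ioc_rpow {a r : ℝ} (ha : 0 ≤ a) (hr : 0 < r) :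
    ∫⁻ t in Ioc 0 a, ENNReal.ofReal (t ^ (r - 1)) = ENNReal.ofReal (a ^ r / r) := by
  have hint : IntegrableOn (fun t : ℝ => t ^ (r - 1)) (Ioc 0 a) :=
    (intervalIntegrable_iff_integrableOn_Ioc_of_le ha).1
      (intervalIntegral.intervalIntegrable_rpow' (by linarith))
  rw [← ofReal_integral_eq_lintegral_ofReal hint (ae_restrict_of_forall_mem measurableSet_Ioc
      fun t ht => Real.rpow_nonneg ht.1.le _), ← intervalIntegral.integral_of_le ha,
    integral_rpow (Or.inl (by linarith)), sub_add_cancel, Real.zero_rpow hr.ne', sub_zero]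

theorem lintegral_rpow_eq_add_lintegral_Ioi {α : Type*} [MeasurableSpace α] {ρ : Measure α}
    {u : α → ℝ} {a r : ℝ} (ha : 0 ≤ a) (hau : ∀ᵐ x ∂ρ, a ≤ u x) (hu : AEMeasurable u ρ)
    (hr : 0 < r) :
    ∫⁻ x, ENNReal.ofReal (u x ^ r) ∂ρ = ρ univ * ENNReal.ofReal (a ^ r) +
      ENNReal.ofReal r * ∫⁻ t in Ioi a, ρ {x | t < u x} * ENNReal.ofReal (t ^ (r - 1)) := by
  have hlow : ∀ t ∈ Ioo 0 a, ρ {x | t < u x} = ρ univ := fun t ht =>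
    measure_congr <| ae_eq_univ.2 <|
      measure_mono_null (fun x hx h => hx (ht.2.trans_le h)) (ae_iff.1 hau)
  have hIoc : ∫⁻ t in Ioc 0 a, ρ {x | t < u x} * ENNReal.ofReal (t ^ (r - 1)) =
      ρ univ * ENNReal.ofReal (a ^ r / r) := by
    rw [← lintegral_Ioc_rpow ha hr, ← lintegral_const_mul _ (by fun_prop),
      ← setLIntegral_congr Ioo_ae_eq_Ioc, ← setLIntegral_congr Ioo_ae_eq_Ioc]
    exact setLIntegral_congr_fun measurableSet_Ioo fun t ht => by rw [hlow t ht]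
  rw [lintegral_rpow_eq_lintegral_meas_lt_mul ρ (hau.mono fun x hx => ha.trans hx) hu hr,
    ← Ioc_union_Ioi_eq_Ioi ha, lintegral_union measurableSet_Ioi (Ioc_disjoint_Ioi le_rfl),
    mul_add, hIoc, mul_left_comm, ← ENNReal.ofReal_mul hr.le, mul_div_cancel₀ _ hr.ne']

theorem ofReal_mul_measure_lt_setLIntegral {α : Type*} [MeasurableSpace α] {μ : Measure α}
    {s : Set α} {g : α → ℝ} {t : ℝ} (hg : 0 ≤ᵐ[μ.restrict s] g) (ht : 0 ≤ t)
    (hts : t < ⨍ x in s, g x ∂μ) :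
    ENNReal.ofReal t * μ s < ∫⁻ x in s, ENNReal.ofReal (g x) ∂μ := by
  have hpos : 0 < ⨍ x in s, g x ∂μ := ht.trans_lt hts
  have hint : IntegrableOn g s μ := .of_integral_ne_zero fun h => by
    simp [setAverage_eq, h] at hpos
  have hμ : μ.real s ≠ 0 := fun h => by simp [setAverage_eq, h] at hpos
  rw [measureReal_def, ENNReal.toReal_ne_zero] at hμ
  rw [← ENNReal.lt_div_iff_mul_lt (Or.inl hμ.1) (Or.inl hμ.2), ← ofReal_setAverage hint hg]
  exact ENNReal.ofReal_lt_ofReal_iff'.2 ⟨hts, hpos⟩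

theorem lintegral_ofReal_eq_of_integral_eq {α : Type*} [MeasurableSpace α] {μ : Measure α}
    {g : α → ℝ} {c : ℝ} (hg : 0 ≤ᵐ[μ] g) (h : ∫ x, g x ∂μ = c) (hc : c ≠ 0) :
    ∫⁻ x, ENNReal.ofReal (g x) ∂μ = ENNReal.ofReal c := by
  rw [← h, ofReal_integral_eq_lintegral_ofReal (.of_integral_ne_zero (h ▸ hc)) hg]

theorem lintegral_mul_rpow_sub_one_le {α : Type*} [MeasurableSpace α] {μ : Measure α}
    {g h : α → ℝ} {p : ℝ} (hp : 1 < p) (hg : AEMeasurable g μ) (hh : AEMeasurable h μ)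
    (hg0 : 0 ≤ᵐ[μ] g) (hh0 : 0 ≤ᵐ[μ] h) :
    ∫⁻ x, ENNReal.ofReal (g x) * ENNReal.ofReal (h x ^ (p - 1)) ∂μ ≤
      (∫⁻ x, ENNReal.ofReal (g x ^ p) ∂μ) ^ (1 / p) *
        (∫⁻ x, ENNReal.ofReal (h x ^ p) ∂μ) ^ ((p - 1) / p) := by
  have hp0 : 0 < p := by linarith
  have hp1 : p - 1 ≠ 0 := by linarith
  have hq : p.HolderConjugate (p / (p - 1)) :=
    (Real.holderConjugate_iff_eq_conjExponent hp).2 rfl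
  calc ∫⁻ x, ENNReal.ofReal (g x) * ENNReal.ofReal (h x ^ (p - 1)) ∂μ
      ≤ (∫⁻ x, ENNReal.ofReal (g x) ^ p ∂μ) ^ (1 / p) *
          (∫⁻ x, ENNReal.ofReal (h x ^ (p - 1)) ^ (p / (p - 1)) ∂μ) ^ (1 / (p / (p - 1))) :=
        ENNReal.lintegral_mul_le_Lp_mul_Lq μ hq hg.ennreal_ofReal
          (hh.pow_const (p - 1)).ennreal_ofReal
    _ = _ := by
      rw [one_div_div]
      congr 2 <;> refine lintegral_congr_ae ?_
      · filter_upwards [hg0] with x hx using ENNReal.ofReal_rpow_of_nonneg hx hp0.le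
      · filter_upwards [hh0] with x hx
        rw [ENNReal.ofReal_rpow_of_nonneg (Real.rpow_nonneg hx _) (by positivity),
          ← Real.rpow_mul hx, mul_div_cancel₀ _ hp1]

/-- `W₁` and `W₂` stand for `∫_f^∞ t^(p-1) |{Mφ > t}| dt` and `∫_f^∞ t^(p-2) ∫_{Mφ > t} φ dt`:
`h₁` is the layer-cake formula for `∫ (Mφ)^p = F z^p`, and `h₂` the one for `∫ φ (Mφ)^(p-1)`
bounded by Hölder's inequality. -/
theorem le_of_bellman_equation {p f F z : ℝ} {W₁ W₂ : ℝ≥0∞} (hp : 1 < p) (hf : 0 ≤ f ^ p)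
    (hF : 0 < F) (hz : 0 ≤ z) (hzeq : -(p - 1) * z ^ p + p * z ^ (p - 1) = f ^ p / F)
    (h₁ : ENNReal.ofReal (F * z ^ p) = ENNReal.ofReal (f ^ p) + ENNReal.ofReal p * W₁)
    (h₂ : ENNReal.ofReal (f ^ p) + ENNReal.ofReal (p - 1) * W₂ ≤
      ENNReal.ofReal F ^ (1 / p) * ENNReal.ofReal (F * z ^ p) ^ ((p - 1) / p)) :
    W₂ ≤ W₁ := by
  have hp0 : 0 < p := by linarith
  have hzp : 0 ≤ z ^ p := Real.rpow_nonneg hz p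
  have hholder : F ^ (1 / p) * (F * z ^ p) ^ ((p - 1) / p) = F * z ^ (p - 1) := by
    rw [Real.mul_rpow hF.le hzp, ← Real.rpow_mul hz, mul_div_cancel₀ _ hp0.ne', ← mul_assoc,
      ← Real.rpow_add hF, ← add_div, add_sub_cancel, div_self hp0.ne', Real.rpow_one]
  rw [ENNReal.ofReal_rpow_of_nonneg hF.le (by positivity), ENNReal.ofReal_rpow_of_nonneg
    (by positivity) (by positivity), ← ENNReal.ofReal_mul (by positivity), hholder] at h₂
  have hW₁ : W₁ ≠ ∞ := fun h => by simp [h, hp0] at h₁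
  have hW₂ : W₂ ≠ ∞ := fun h => by simp [h, hp] at h₂
  rw [← ENNReal.ofReal_toReal hW₁, ← ENNReal.ofReal_mul hp0.le,
    ← ENNReal.ofReal_add hf (by positivity)] at h₁
  rw [← ENNReal.ofReal_toReal hW₂, ← ENNReal.ofReal_mul (by linarith),
    ← ENNReal.ofReal_add hf (by positivity)] at h₂
  rw [ENNReal.ofReal_eq_ofReal_iff (by positivity) (by positivity)] at h₁
  rw [ENNReal.ofReal_le_ofReal_iff (by positivity)] at h₂
  rw [← ENNReal.toReal_le_toReal hW₂ hW₁]
  rw [eq_div_iff hF.ne'] at hzeq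
  refine le_of_mul_le_mul_left ?_ (mul_pos hp0 (sub_pos.2 hp))
  linear_combination p * h₂ + (p - 1) * h₁ + hzeq

def dyadicInterval (N a : ℕ) : Set ℝ := Ico ((a : ℝ) / 2 ^ N) ((a + 1) / 2 ^ N)

def dyadicCube (n N : ℕ) (k : Fin n → ℕ) : Set (Fin n → ℝ) :=
  univ.pi fun i => dyadicInterval N (k i)

section DyadicGeometry

variable {n N M : ℕ}

theorem mem_dyadicInterval_iff {a : ℕ} {x : ℝ} :
    x ∈ dyadicInterval N a ↔ 0 ≤ x ∧ ⌊x * 2 ^ N⌋₊ = a := by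
  have h2 : (0 : ℝ) < 2 ^ N := by positivity
  rw [dyadicInterval, mem_Ico, div_le_iff₀ h2, lt_div_iff₀ h2]
  constructor
  · rintro ⟨hlo, hhi⟩
    have hx : 0 ≤ x * 2 ^ N := (Nat.cast_nonneg a).trans hlo
    exact ⟨nonneg_of_mul_nonneg_left hx h2, (Nat.floor_eq_iff hx).2 ⟨hlo, hhi⟩⟩
  · rintro ⟨hx, rfl⟩
    exact (Nat.floor_eq_iff (by positivity)).1 rfl

theorem dyadicInterval_subset_dyadicInterval_div (h : N ≤ M) (b : ℕ) :
    dyadicInterval M b ⊆ dyadicInterval N (b / 2 ^ (M - N)) := by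
  intro x hx
  rw [mem_dyadicInterval_iff] at hx ⊢
  refine ⟨hx.1, ?_⟩
  have hpow : x * 2 ^ N = x * 2 ^ M / ((2 ^ (M - N) : ℕ) : ℝ) := by
    rw [eq_div_iff (by positivity), Nat.cast_pow, Nat.cast_ofNat, mul_assoc, ← pow_add,
      Nat.add_sub_cancel' h]
  rw [hpow, Nat.floor_div_natCast, hx.2]

theorem disjoint_dyadicInterval {a b : ℕ} (h : a ≠ b) :
    Disjoint (dyadicInterval N a) (dyadicInterval N b) :=
  disjoint_left.2 fun _ ha hb =>
    h ((mem_dyadicInterval_iff.1 ha).2.symm.trans (mem_dyadicInterval_iff.1 hb).2)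

theorem dyadicCube_subset_dyadicCube_div (h : N ≤ M) (k : Fin n → ℕ) :
    dyadicCube n M k ⊆ dyadicCube n N (fun i => k i / 2 ^ (M - N)) :=
  pi_mono fun i _ => dyadicInterval_subset_dyadicInterval_div h (k i)

theorem disjoint_dyadicCube {k k' : Fin n → ℕ} (h : k ≠ k') :
    Disjoint (dyadicCube n N k) (dyadicCube n N k') := by
  obtain ⟨i, hi⟩ := Function.ne_iff.1 h
  exact disjoint_pi.2 ⟨i, mem_univ i, disjoint_dyadicInterval hi⟩

theorem dyadicCube_subset_or_disjoint (h : N ≤ M) (k k' : Fin n → ℕ) :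
    dyadicCube n M k' ⊆ dyadicCube n N k ∨ Disjoint (dyadicCube n M k') (dyadicCube n N k) := by
  by_cases hk : (fun i => k' i / 2 ^ (M - N)) = k
  · exact Or.inl (hk ▸ dyadicCube_subset_dyadicCube_div h k')
  · exact Or.inr ((disjoint_dyadicCube hk).mono_left (dyadicCube_subset_dyadicCube_div h k'))

theorem dyadicCube_nonempty (k : Fin n → ℕ) : (dyadicCube n N k).Nonempty :=
  univ_pi_nonempty_iff.2 fun i => nonempty_Ico.2 (by gcongr; linarith)

theorem measurableSet_dyadicCube (k : Fin n → ℕ) : MeasurableSet (dyadicCube n N k) :=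
  MeasurableSet.univ_pi fun _ => measurableSet_Ico

theorem unitCube_eq_dyadicCube : unitCube n = dyadicCube n 0 0 := by
  simp [unitCube, dyadicCube, dyadicInterval]

theorem measurableSet_unitCube : MeasurableSet (unitCube n) :=
  unitCube_eq_dyadicCube ▸ measurableSet_dyadicCube 0

theorem volume_unitCube : volume (unitCube n) = 1 := by
  simp [unitCube, volume_pi_pi]

theorem isDyadicCube_iff {R : Set (Fin n → ℝ)} :
    IsDyadicCube n R ↔ ∃ N k, (∀ i, k i < 2 ^ N) ∧ R = dyadicCube n N k :=
  Iff.rfl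

theorem isDyadicCube_unitCube : IsDyadicCube n (unitCube n) :=
  isDyadicCube_iff.2 ⟨0, 0, fun _ => Nat.zero_lt_one, unitCube_eq_dyadicCube⟩

namespace IsDyadicCube

variable {R R' : Set (Fin n → ℝ)}

theorem subset_unitCube (hR : IsDyadicCube n R) : R ⊆ unitCube n := by
  obtain ⟨N, k, hk, rfl⟩ := isDyadicCube_iff.1 hR
  rw [unitCube_eq_dyadicCube]
  convert dyadicCube_subset_dyadicCube_div (Nat.zero_le N) k
  exact (Nat.div_eq_of_lt (hk _)).symm

theorem measurableSet (hR : IsDyadicCube n R) : MeasurableSet R := by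
  obtain ⟨N, k, -, rfl⟩ := isDyadicCube_iff.1 hR
  exact measurableSet_dyadicCube k

theorem subset_or_subset_or_disjoint (hR : IsDyadicCube n R) (hR' : IsDyadicCube n R') :
    R ⊆ R' ∨ R' ⊆ R ∨ Disjoint R R' := by
  obtain ⟨N, k, -, rfl⟩ := isDyadicCube_iff.1 hR
  obtain ⟨N', k', -, rfl⟩ := isDyadicCube_iff.1 hR'
  rcases le_total N N' with h | h
  · rcases dyadicCube_subset_or_disjoint h k k' with h' | h'
    exacts [Or.inr (Or.inl h'), Or.inr (Or.inr h'.symm)]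
  · rcases dyadicCube_subset_or_disjoint h k' k with h' | h'
    exacts [Or.inl h', Or.inr (Or.inr h')]

end IsDyadicCube

theorem countable_setOf_isDyadicCube : {R : Set (Fin n → ℝ) | IsDyadicCube n R}.Countable :=
  (countable_range fun q : ℕ × (Fin n → ℕ) => dyadicCube n q.1 q.2).mono fun R hR => by
    obtain ⟨N, k, -, rfl⟩ := isDyadicCube_iff.1 hR
    exact ⟨(N, k), rfl⟩

end DyadicGeometry

section MaximalCubes

variable {n : ℕ} {C : Set (Set (Fin n → ℝ))}

theorem exists_maximal_superset_of_isDyadicCube (hC : ∀ R ∈ C, IsDyadicCube n R)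
    {R : Set (Fin n → ℝ)} (hR : R ∈ C) : ∃ R', Maximal (· ∈ C) R' ∧ R ⊆ R' := by
  classical
  -- the cube of `C` containing `R` at the coarsest possible level is maximal
  have hex : ∃ N k, dyadicCube n N k ∈ C ∧ R ⊆ dyadicCube n N k := by
    obtain ⟨N, k, -, rfl⟩ := isDyadicCube_iff.1 (hC R hR)
    exact ⟨N, k, hR, subset_rfl⟩
  obtain ⟨k₀, hk₀C, hRk₀⟩ := Nat.find_spec hex
  refine ⟨_, ⟨hk₀C, fun R' hR' hsub => ?_⟩, hRk₀⟩
  obtain ⟨N, k, -, rfl⟩ := isDyadicCube_iff.1 (hC R' hR')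
  have hle : Nat.find hex ≤ N := Nat.find_min' hex ⟨k, hR', hRk₀.trans hsub⟩
  refine (dyadicCube_subset_or_disjoint hle k₀ k).resolve_right fun hdisj => ?_
  exact (dyadicCube_nonempty k₀).ne_empty (disjoint_self.1 (hdisj.mono_left hsub))

theorem pairwiseDisjoint_maximal_of_isDyadicCube (hC : ∀ R ∈ C, IsDyadicCube n R) :
    {R | Maximal (· ∈ C) R}.PairwiseDisjoint id := by
  rintro R₁ h₁ R₂ h₂ hne
  rcases (hC _ h₁.1).subset_or_subset_or_disjoint (hC _ h₂.1) with h | h | h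
  · exact absurd (le_antisymm h (h₁.2 h₂.1 h)) hne
  · exact absurd (le_antisymm (h₂.2 h₁.1 h) h) hne
  · exact h

theorem sUnion_maximal_of_isDyadicCube (hC : ∀ R ∈ C, IsDyadicCube n R) :
    ⋃₀ {R | Maximal (· ∈ C) R} = ⋃₀ C := by
  refine subset_antisymm (sUnion_mono fun R hR => hR.1) ?_
  rintro x ⟨R, hR, hx⟩
  obtain ⟨R', hR', hRR'⟩ := exists_maximal_superset_of_isDyadicCube hC hR
  exact ⟨R', hR', hRR' hx⟩

/-- `⋃₀ C` is the disjoint union of the maximal cubes of `C`. -/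
theorem mul_volume_sUnion_lt_setLIntegral (hC : ∀ R ∈ C, IsDyadicCube n R) (hne : C.Nonempty)
    {c : ℝ≥0∞} (hc : c ≠ ∞) {g : (Fin n → ℝ) → ℝ≥0∞}
    (hg : ∀ R ∈ C, c * volume R < ∫⁻ x in R, g x) :
    c * volume (⋃₀ C) < ∫⁻ x in ⋃₀ C, g x := by
  set 𝓜 := {R | Maximal (· ∈ C) R}
  have : Countable 𝓜 := (countable_setOf_isDyadicCube.mono fun R hR => hC R hR.1).to_subtype
  have hm : ∀ R : 𝓜, MeasurableSet (R : Set (Fin n → ℝ)) := fun R => (hC _ R.2.1).measurableSet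
  have hd : Pairwise (Function.onFun Disjoint fun R : 𝓜 => (R : Set (Fin n → ℝ))) :=
    fun R R' h =>
      pairwiseDisjoint_maximal_of_isDyadicCube hC R.2 R'.2 (Subtype.coe_injective.ne h)
  have hfin : c * volume (⋃₀ C) ≠ ∞ := by
    refine ENNReal.mul_ne_top hc (ne_top_of_le_ne_top ?_
      (measure_mono (sUnion_subset fun R hR => (hC R hR).subset_unitCube)))
    rw [volume_unitCube]
    exact ENNReal.one_ne_top
  obtain ⟨R₀, hR₀, -⟩ := exists_maximal_superset_of_isDyadicCube hC hne.some_mem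
  rw [← sUnion_maximal_of_isDyadicCube hC, sUnion_eq_iUnion, measure_iUnion hd hm,
    ← ENNReal.tsum_mul_left] at hfin ⊢
  rw [lintegral_iUnion hm hd]
  exact ENNReal.tsum_lt_tsum (i := ⟨R₀, hR₀⟩) hfin (fun R => (hg R R.2.1).le) (hg R₀ hR₀.1)

end MaximalCubes

/-- `dyadicLevelSet n φ t = {x | t < Mφ(x)}`, up to a null set (`ae_dyadicMax`). -/
def dyadicLevelSet (n : ℕ) (φ : (Fin n → ℝ) → ℝ) (t : ℝ) : Set (Fin n → ℝ) :=
  ⋃₀ {R | IsDyadicCube n R ∧ t < ⨍ x in R, φ x}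

def dyadicAverages (n : ℕ) (φ : (Fin n → ℝ) → ℝ) (x : Fin n → ℝ) : Set ℝ :=
  {a | ∃ R, IsDyadicCube n R ∧ x ∈ R ∧ a = ⨍ y in R, φ y}

section LevelSets

variable {n : ℕ} {φ : (Fin n → ℝ) → ℝ}

theorem dyadicLevelSet_subset_unitCube (t : ℝ) : dyadicLevelSet n φ t ⊆ unitCube n :=
  sUnion_subset fun _ hR => hR.1.subset_unitCube

theorem measurableSet_dyadicLevelSet (t : ℝ) : MeasurableSet (dyadicLevelSet n φ t) :=
  .sUnion (countable_setOf_isDyadicCube.mono fun _ hR => hR.1) fun _ hR => hR.1.measurableSet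

theorem antitone_dyadicLevelSet : Antitone (dyadicLevelSet n φ) :=
  fun _ _ hst => sUnion_mono fun _ hR => ⟨hR.1, hst.trans_lt hR.2⟩

theorem ofReal_mul_volume_dyadicLevelSet_lt (hφ : ∀ x, 0 ≤ φ x) {t : ℝ} (ht : 0 ≤ t)
    (hne : (dyadicLevelSet n φ t).Nonempty) :
    ENNReal.ofReal t * volume (dyadicLevelSet n φ t) <
      ∫⁻ x in dyadicLevelSet n φ t, ENNReal.ofReal (φ x) := by
  obtain ⟨R, hR, -⟩ := nonempty_sUnion.1 hne
  exact mul_volume_sUnion_lt_setLIntegral (fun _ hR => hR.1) ⟨R, hR⟩ ENNReal.ofReal_ne_top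
    fun _ hR => ofReal_mul_measure_lt_setLIntegral (ae_of_all _ hφ) ht hR.2

theorem ofReal_mul_volume_dyadicLevelSet_le (hφ : ∀ x, 0 ≤ φ x) {t : ℝ} (ht : 0 ≤ t) :
    ENNReal.ofReal t * volume (dyadicLevelSet n φ t) ≤
      ∫⁻ x in dyadicLevelSet n φ t, ENNReal.ofReal (φ x) := by
  rcases (dyadicLevelSet n φ t).eq_empty_or_nonempty with h | h
  · simp [h]
  · exact (ofReal_mul_volume_dyadicLevelSet_lt hφ ht h).le

theorem dyadicMax_eq_sSup (x : Fin n → ℝ) :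
    dyadicMax n φ x = sSup (dyadicAverages n φ x) := by
  simp only [dyadicMax, dyadicAverages, setAverage_eq, smul_eq_mul, measureReal_def]

theorem ae_bddAbove_dyadicAverages (hφ : ∀ x, 0 ≤ φ x)
    (hφi : IntegrableOn φ (unitCube n)) : ∀ᵐ x, BddAbove (dyadicAverages n φ x) := by
  -- points with unbounded averages lie in every `dyadicLevelSet n φ t`, of measure `O(1/t)`
  set Z := {x | ¬BddAbove (dyadicAverages n φ x)}
  have hZ : ∀ t, Z ⊆ dyadicLevelSet n φ t := fun t x hx => by
    obtain ⟨_, ⟨R, hR, hxR, rfl⟩, htR⟩ := not_bddAbove_iff.1 hx t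
    exact ⟨R, ⟨hR, htR⟩, hxR⟩
  refine ae_iff.2 (by_contra fun hZ0 => ?_)
  obtain ⟨m, hm⟩ := ENNReal.exists_nat_mul_gt hZ0 hφi.lintegral_lt_top.ne
  refine hm.not_ge ?_
  calc (m : ℝ≥0∞) * volume Z
      ≤ ENNReal.ofReal m * volume (dyadicLevelSet n φ m) := by
        rw [ENNReal.ofReal_natCast]
        gcongr
        exact hZ m
    _ ≤ ∫⁻ x in dyadicLevelSet n φ m, ENNReal.ofReal (φ x) :=
        ofReal_mul_volume_dyadicLevelSet_le hφ m.cast_nonneg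
    _ ≤ ∫⁻ x in unitCube n, ENNReal.ofReal (φ x) :=
        lintegral_mono_set (dyadicLevelSet_subset_unitCube m)

theorem lt_dyadicMax_iff {x : Fin n → ℝ} (hx : x ∈ unitCube n)
    (hb : BddAbove (dyadicAverages n φ x)) {t : ℝ} :
    t < dyadicMax n φ x ↔ x ∈ dyadicLevelSet n φ t := by
  rw [dyadicMax_eq_sSup, lt_csSup_iff hb ⟨_, _, isDyadicCube_unitCube, hx, rfl⟩]
  constructor
  · rintro ⟨_, ⟨R, hR, hxR, rfl⟩, htR⟩
    exact ⟨R, ⟨hR, htR⟩, hxR⟩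
  · rintro ⟨R, ⟨hR, htR⟩, hxR⟩
    exact ⟨_, ⟨R, hR, hxR, rfl⟩, htR⟩

theorem ae_dyadicMax (hφ : ∀ x, 0 ≤ φ x) (hφi : IntegrableOn φ (unitCube n)) :
    ∀ᵐ x ∂volume.restrict (unitCube n), (⨍ y in unitCube n, φ y) ≤ dyadicMax n φ x ∧
      ∀ t, t < dyadicMax n φ x ↔ x ∈ dyadicLevelSet n φ t := by
  filter_upwards [ae_restrict_mem measurableSet_unitCube,
    ae_restrict_of_ae (ae_bddAbove_dyadicAverages hφ hφi)] with x hx hb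
  refine ⟨?_, fun t => lt_dyadicMax_iff hx hb⟩
  rw [dyadicMax_eq_sSup]
  exact le_csSup hb ⟨_, isDyadicCube_unitCube, hx, rfl⟩

theorem dyadicMax_nonneg (hφ : ∀ x, 0 ≤ φ x) (x : Fin n → ℝ) :
    0 ≤ dyadicMax n φ x := by
  rw [dyadicMax_eq_sSup]
  refine Real.sSup_nonneg fun a ⟨R, _, _, ha⟩ => ?_
  rw [ha, setAverage_eq, smul_eq_mul]
  exact mul_nonneg (inv_nonneg.2 measureReal_nonneg) (integral_nonneg fun x => hφ x)

end LevelSets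

section LayerCake

variable {n : ℕ} {φ : (Fin n → ℝ) → ℝ}

theorem setAverage_unitCube (g : (Fin n → ℝ) → ℝ) :
    ⨍ x in unitCube n, g x = ∫ x in unitCube n, g x := by
  simp [setAverage_eq, measureReal_def, volume_unitCube]

theorem lintegral_dyadicMax_rpow_of_absolutelyContinuous (hφ : ∀ x, 0 ≤ φ x)
    (hφi : IntegrableOn φ (unitCube n)) {ρ : Measure (Fin n → ℝ)}
    (hρ : ρ ≪ volume.restrict (unitCube n)) (hM : AEMeasurable (dyadicMax n φ) ρ) {r : ℝ}
    (hr : 0 < r) :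
    ∫⁻ x, ENNReal.ofReal (dyadicMax n φ x ^ r) ∂ρ =
      ρ univ * ENNReal.ofReal ((∫ x in unitCube n, φ x) ^ r) +
        ENNReal.ofReal r * ∫⁻ t in Ioi (∫ x in unitCube n, φ x),
          ρ (dyadicLevelSet n φ t) * ENNReal.ofReal (t ^ (r - 1)) := by
  have hae : ∀ᵐ x ∂ρ, _ := hρ.ae_le (ae_dyadicMax hφ hφi)
  have hf : 0 ≤ ∫ x in unitCube n, φ x := setIntegral_nonneg measurableSet_unitCube fun x _ => hφ x
  rw [lintegral_rpow_eq_add_lintegral_Ioi hf (hae.mono fun x hx => setAverage_unitCube φ ▸ hx.1)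
    hM hr]
  congr 3 with t
  exact congrArg (· * _) (measure_congr (hae.mono fun x hx => propext (hx.2 t)))

theorem lintegral_dyadicMax_rpow (hφ : ∀ x, 0 ≤ φ x) (hφi : IntegrableOn φ (unitCube n))
    (hM : AEMeasurable (dyadicMax n φ) (volume.restrict (unitCube n))) {r : ℝ} (hr : 0 < r) :
    ∫⁻ x in unitCube n, ENNReal.ofReal (dyadicMax n φ x ^ r) =
      ENNReal.ofReal ((∫ x in unitCube n, φ x) ^ r) +
        ENNReal.ofReal r * ∫⁻ t in Ioi (∫ x in unitCube n, φ x),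
          volume (dyadicLevelSet n φ t) * ENNReal.ofReal (t ^ (r - 1)) := by
  rw [lintegral_dyadicMax_rpow_of_absolutelyContinuous hφ hφi .rfl hM hr,
    Measure.restrict_apply_univ, volume_unitCube, one_mul]
  congr 3 with t
  rw [Measure.restrict_eq_self _ (dyadicLevelSet_subset_unitCube t)]

theorem lintegral_mul_dyadicMax_rpow (hφ : ∀ x, 0 ≤ φ x) (hφi : IntegrableOn φ (unitCube n))
    (hM : AEMeasurable (dyadicMax n φ) (volume.restrict (unitCube n))) {r : ℝ} (hr : 0 < r) :
    ∫⁻ x in unitCube n, ENNReal.ofReal (φ x) * ENNReal.ofReal (dyadicMax n φ x ^ r) =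
      ENNReal.ofReal ((∫ x in unitCube n, φ x) ^ (r + 1)) +
        ENNReal.ofReal r * ∫⁻ t in Ioi (∫ x in unitCube n, φ x),
          (∫⁻ x in dyadicLevelSet n φ t, ENNReal.ofReal (φ x)) * ENNReal.ofReal (t ^ (r - 1)) := by
  set ν := (volume.restrict (unitCube n)).withDensity fun x => ENNReal.ofReal (φ x)
  have hac : ν ≪ volume.restrict (unitCube n) := withDensity_absolutelyContinuous _ _
  have hf : 0 ≤ ∫ x in unitCube n, φ x := setIntegral_nonneg measurableSet_unitCube fun x _ => hφ x
  have hνQ : ν univ = ENNReal.ofReal (∫ x in unitCube n, φ x) := by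
    rw [withDensity_apply', Measure.restrict_univ,
      ofReal_integral_eq_lintegral_ofReal hφi (ae_of_all _ hφ)]
  have hνE (t : ℝ) :
      ν (dyadicLevelSet n φ t) = ∫⁻ x in dyadicLevelSet n φ t, ENNReal.ofReal (φ x) := by
    rw [withDensity_apply', Measure.restrict_restrict (measurableSet_dyadicLevelSet t),
      inter_eq_left.2 (dyadicLevelSet_subset_unitCube t)]
  calc ∫⁻ x in unitCube n, ENNReal.ofReal (φ x) * ENNReal.ofReal (dyadicMax n φ x ^ r)
      = ∫⁻ x, ENNReal.ofReal (dyadicMax n φ x ^ r) ∂ν :=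
        (lintegral_withDensity_eq_lintegral_mul₀ hφi.aemeasurable.ennreal_ofReal
          (hM.pow_const r).ennreal_ofReal).symm
    _ = _ := lintegral_dyadicMax_rpow_of_absolutelyContinuous hφ hφi hac (hM.mono_ac hac) hr
    _ = _ := by
      rw [hνQ, ← ENNReal.ofReal_mul hf, ← Real.rpow_one_add' hf (by linarith), add_comm 1 r]
      simp only [hνE]

theorem lintegral_volume_dyadicLevelSet_mul_rpow_lt (hφ : ∀ x, 0 ≤ φ x) {a r : ℝ} (ha : 0 ≤ a)
    (hfin : ∫⁻ t in Ioi a, volume (dyadicLevelSet n φ t) * ENNReal.ofReal (t ^ r) ≠ ∞)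
    (hpos : ∫⁻ t in Ioi a, volume (dyadicLevelSet n φ t) * ENNReal.ofReal (t ^ r) ≠ 0) :
    ∫⁻ t in Ioi a, volume (dyadicLevelSet n φ t) * ENNReal.ofReal (t ^ r) <
      ∫⁻ t in Ioi a, (∫⁻ x in dyadicLevelSet n φ t, ENNReal.ofReal (φ x)) *
        ENNReal.ofReal (t ^ (r - 1)) := by
  have hsplit : ∀ t ∈ Ioi a, volume (dyadicLevelSet n φ t) * ENNReal.ofReal (t ^ r) =
      ENNReal.ofReal t * volume (dyadicLevelSet n φ t) * ENNReal.ofReal (t ^ (r - 1)) := by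
    intro t ht
    have ht0 : 0 < t := ha.trans_lt ht
    rw [mul_comm (ENNReal.ofReal t), mul_assoc, ← ENNReal.ofReal_mul ht0.le,
      Real.rpow_sub_one ht0.ne', mul_div_cancel₀ _ ht0.ne']
  have hanti : Antitone fun t => ∫⁻ x in dyadicLevelSet n φ t, ENNReal.ofReal (φ x) :=
    fun _ _ hst => lintegral_mono_set (antitone_dyadicLevelSet hst)
  refine lintegral_strict_mono_of_ae_le_of_ae_lt_on
    (hanti.measurable.mul (by fun_prop)).aemeasurable hfin ?_
    (s := {t | volume (dyadicLevelSet n φ t) * ENNReal.ofReal (t ^ r) ≠ 0}) ?_ ?_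
  · refine ae_restrict_of_forall_mem measurableSet_Ioi fun t ht => ?_
    simp only [hsplit t ht]
    gcongr
    exact ofReal_mul_volume_dyadicLevelSet_le hφ (ha.trans ht.le)
  · refine fun h0 => hpos ((lintegral_congr_ae ?_).trans lintegral_zero)
    exact (ae_iff (p := fun t => volume (dyadicLevelSet n φ t) * ENNReal.ofReal (t ^ r) = 0)).2
      h0
  · refine ae_restrict_of_forall_mem measurableSet_Ioi fun t ht hs => ?_
    have ht0 : 0 < t := ha.trans_lt ht
    simp only [hsplit t ht]
    refine ENNReal.mul_lt_mul_left (ENNReal.ofReal_pos.2 (Real.rpow_pos_of_pos ht0 _)).ne'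
      ENNReal.ofReal_ne_top (ofReal_mul_volume_dyadicLevelSet_lt hφ ht0.le ?_)
    exact nonempty_of_measure_ne_zero (left_ne_zero_of_mul hs)

end LayerCake

theorem no_extremal_function_general (n : ℕ) (p f F z : ℝ) (hp : 1 < p)
    (hf : 0 < f ^ p) (hfF : f ^ p < F)
    (hz : z ∈ Set.Icc 1 (p / (p - 1)))
    (hzeq : -(p - 1) * z ^ p + p * z ^ (p - 1) = f ^ p / F) :
    ¬ ∃ φ : (Fin n → ℝ) → ℝ, (∀ x, 0 ≤ φ x) ∧ Measurable φ ∧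
        (∫ x in unitCube n, φ x) = f ∧ (∫ x in unitCube n, φ x ^ p) = F ∧
        (∫ x in unitCube n, (dyadicMax n φ x) ^ p) = F * z ^ p := by
  rintro ⟨φ, hφ, -, hQf, hQF, hQM⟩
  have hp0 : 0 < p := by linarith
  have hF : 0 < F := hf.trans hfF
  have hFz : F ≤ F * z ^ p := le_mul_of_one_le_right hF.le (Real.one_le_rpow hz.1 hp0.le)
  have hf0 : 0 ≤ f := hQf ▸ setIntegral_nonneg measurableSet_unitCube fun x _ => hφ x
  have hφi : IntegrableOn φ (unitCube n) :=
    .of_integral_ne_zero (hQf ▸ fun h => by simp [h, Real.zero_rpow hp0.ne'] at hf)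
  have hMp := lintegral_ofReal_eq_of_integral_eq
    (ae_of_all _ fun x => Real.rpow_nonneg (dyadicMax_nonneg hφ x) p) hQM (hF.trans_le hFz).ne'
  have hφp := lintegral_ofReal_eq_of_integral_eq
    (ae_of_all _ fun x => Real.rpow_nonneg (hφ x) p) hQF hF.ne'
  have hM : AEMeasurable (dyadicMax n φ) (volume.restrict (unitCube n)) :=
    ((Integrable.of_integral_ne_zero (hQM ▸ (hF.trans_le hFz).ne')).aemeasurable.pow_const
      p⁻¹).congr (ae_of_all _ fun x => Real.rpow_rpow_inv (dyadicMax_nonneg hφ x) hp0.ne')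
  have h₁ := lintegral_dyadicMax_rpow hφ hφi hM hp0
  have h₂ := lintegral_mul_dyadicMax_rpow hφ hφi hM (sub_pos.2 hp)
  have hHölder := lintegral_mul_rpow_sub_one_le hp hφi.aemeasurable hM (ae_of_all _ hφ)
    (ae_of_all _ (dyadicMax_nonneg hφ))
  rw [hMp, hQf] at h₁
  rw [hQf, sub_add_cancel] at h₂
  rw [h₂, hφp, hMp] at hHölder
  set W₁ := ∫⁻ t in Ioi f, volume (dyadicLevelSet n φ t) * ENNReal.ofReal (t ^ (p - 1))
  have hW₁_ne_top : W₁ ≠ ∞ := fun h => by simp [h, hp0] at h₁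
  have hW₁_ne_zero : W₁ ≠ 0 := fun h => by
    simp only [h, mul_zero, add_zero] at h₁
    linarith [(ENNReal.ofReal_eq_ofReal_iff (hF.le.trans hFz) hf.le).1 h₁]
  have hlt := lintegral_volume_dyadicLevelSet_mul_rpow_lt hφ hf0 hW₁_ne_top hW₁_ne_zero
  exact (le_of_bellman_equation hp hf.le hF (by linarith [hz.1]) hzeq h₁ hHölder).not_gt hlt

/-- Nonexistence of extremal functions for the Bellman function when `f^p < F`. -/
theorem no_extremal_function (n : ℕ) (hn : 1 ≤ n) (p f F z : ℝ) (hp : 1 < p)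
    (hf : 0 < f ^ p) (hfF : f ^ p < F)
    (hz : z ∈ Set.Icc 1 (p / (p - 1)))
    (hzeq : -(p - 1) * z ^ p + p * z ^ (p - 1) = f ^ p / F) :
    ¬ ∃ φ : (Fin n → ℝ) → ℝ, (∀ x, 0 ≤ φ x) ∧ Measurable φ ∧
        (∫ x in unitCube n, φ x) = f ∧ (∫ x in unitCube n, φ x ^ p) = F ∧
        (∫ x in unitCube n, (dyadicMax n φ x) ^ p) = F * z ^ p :=
  no_extremal_function_general n p f F z hp hf hfF hz hzeq
end
end
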